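/- For all constants α ∈ ℝ and β ≥ 0 and every smooth f : ℝ^d × ℝ^d → ℝ, at every point of ℝ^d × ℝ^d one has Γ₂^{α,β}(f) ≥ α·‖∇_ξ f‖² − ⟨∇_ξ f, ∇_p f⟩. -/

import Mathlib

noncomputable section

abbrev Ed (d : ℕ) : Type := EuclideanSpace ℝ (Fin d)

/-- Partial derivative in the variable `p_i`. -/
def dP (d : ℕ) (i : Fin d) (f : Ed d × Ed d → ℝ) (x : Ed d × Ed d) : ℝ :=
  fderiv ℝ f x ((EuclideanSpace.single i 1 : Ed d), (0 : Ed d))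

/-- Partial derivative in the variable `ξ_i`. -/
def dXi (d : ℕ) (i : Fin d) (f : Ed d × Ed d → ℝ) (x : Ed d × Ed d) : ℝ :=
  fderiv ℝ f x ((0 : Ed d), (EuclideanSpace.single i 1 : Ed d))

/-- Gradient in the `p` variable. -/
def gradP (d : ℕ) (f : Ed d × Ed d → ℝ) (x : Ed d × Ed d) : Ed d :=
  gradient (fun p => f (p, x.2)) x.1

/-- Gradient in the `ξ` variable. -/
def gradXi (d : ℕ) (f : Ed d × Ed d → ℝ) (x : Ed d × Ed d) : Ed d :=
  gradient (fun ξ => f (x.1, ξ)) x.2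

/-- The Kolmogorov operator `Lf(p,ξ) = ⟨p, ∇_ξ f(p,ξ)⟩ + (σ²/2)Δ_p f(p,ξ)`. -/
def Lkol (d : ℕ) (σ : ℝ) (f : Ed d × Ed d → ℝ) (x : Ed d × Ed d) : ℝ :=
  inner ℝ x.1 (gradXi d f x) + σ ^ 2 / 2 * ∑ i : Fin d, dP d i (fun y => dP d i f y) x

/-- The bilinear form `Γ^{α,β}(f,g)`. -/
def gamAB (d : ℕ) (α β : ℝ) (f g : Ed d × Ed d → ℝ) (x : Ed d × Ed d) : ℝ :=
  inner ℝ (gradP d f x) (gradP d g x) - α * inner ℝ (gradP d f x) (gradXi d g x)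
    - α * inner ℝ (gradXi d f x) (gradP d g x)
    + (α ^ 2 + β) * inner ℝ (gradXi d f x) (gradXi d g x)

/-- `Γ₂^{α,β}(f) = (1/2)L(Γ^{α,β}(f)) − Γ^{α,β}(f, Lf)`. -/
def gamAB2 (d : ℕ) (σ α β : ℝ) (f : Ed d × Ed d → ℝ) (x : Ed d × Ed d) : ℝ :=
  1 / 2 * Lkol d σ (gamAB d α β f f) x - gamAB d α β f (Lkol d σ f) x

/-! ### Auxiliary lemmas -/

variable {d : ℕ}

lemma gradP_apply (f : Ed d × Ed d → ℝ) (x : Ed d × Ed d)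
    (hf : DifferentiableAt ℝ f x) (i : Fin d) :
    gradP d f x i = dP d i f x := by
  have h1 : HasFDerivAt (fun p : Ed d => (p, x.2)) ((ContinuousLinearMap.id ℝ (Ed d)).prod 0) x.1 :=
    (hasFDerivAt_id x.1).prodMk (hasFDerivAt_const x.2 x.1)
  have h2 : HasFDerivAt (fun p : Ed d => f (p, x.2))
      ((fderiv ℝ f x).comp ((ContinuousLinearMap.id ℝ (Ed d)).prod 0)) x.1 := by
    have := hf.hasFDerivAt.comp x.1 h1
    exact this
  have : gradP d f x i = @inner ℝ _ _ (gradP d f x) (EuclideanSpace.single i 1) := by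
    rw [real_inner_comm]
    simp [EuclideanSpace.inner_single_left]
  rw [this]
  unfold gradP
  rw [gradient, InnerProductSpace.toDual_symm_apply, h2.fderiv]
  rfl

lemma gradXi_apply (f : Ed d × Ed d → ℝ) (x : Ed d × Ed d)
    (hf : DifferentiableAt ℝ f x) (i : Fin d) :
    gradXi d f x i = dXi d i f x := by
  have h1 : HasFDerivAt (fun q : Ed d => (x.1, q))
      ((0 : Ed d →L[ℝ] Ed d).prod (ContinuousLinearMap.id ℝ (Ed d))) x.2 :=
    (hasFDerivAt_const x.1 x.2).prodMk (hasFDerivAt_id x.2)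
  have h2 : HasFDerivAt (fun q : Ed d => f (x.1, q))
      ((fderiv ℝ f x).comp ((0 : Ed d →L[ℝ] Ed d).prod (ContinuousLinearMap.id ℝ (Ed d)))) x.2 := by
    have := hf.hasFDerivAt.comp x.2 h1
    exact this
  have : gradXi d f x i = @inner ℝ _ _ (gradXi d f x) (EuclideanSpace.single i 1) := by
    rw [real_inner_comm]
    simp [EuclideanSpace.inner_single_left]
  rw [this]
  unfold gradXi
  rw [gradient, InnerProductSpace.toDual_symm_apply, h2.fderiv]
  rfl

lemma contDiff_dv (f : Ed d × Ed d → ℝ) (hf : ContDiff ℝ (⊤ : ℕ∞) f) (v : Ed d × Ed d) :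
    ContDiff ℝ (⊤ : ℕ∞) (fun x => fderiv ℝ f x v) := by
  have h := (hf.fderiv_right (m := (⊤ : ℕ∞)) (by simp))
  exact (ContinuousLinearMap.apply ℝ ℝ v).contDiff.comp h

lemma contDiff_dP (i : Fin d) (f : Ed d × Ed d → ℝ) (hf : ContDiff ℝ (⊤ : ℕ∞) f) :
    ContDiff ℝ (⊤ : ℕ∞) (dP d i f) := contDiff_dv f hf _

lemma contDiff_dXi (i : Fin d) (f : Ed d × Ed d → ℝ) (hf : ContDiff ℝ (⊤ : ℕ∞) f) :
    ContDiff ℝ (⊤ : ℕ∞) (dXi d i f) := contDiff_dv f hf _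

lemma dv_mul {x : Ed d × Ed d} (f g : Ed d × Ed d → ℝ) (hf : DifferentiableAt ℝ f x)
    (hg : DifferentiableAt ℝ g x) (v : Ed d × Ed d) :
    fderiv ℝ (fun y => f y * g y) x v = fderiv ℝ f x v * g x + f x * fderiv ℝ g x v := by
  rw [fderiv_fun_mul hf hg]; simp; ring

lemma dv_sum {x : Ed d × Ed d} {ι : Type*} (s : Finset ι) (F : ι → (Ed d × Ed d → ℝ))
    (hF : ∀ i ∈ s, DifferentiableAt ℝ (F i) x) (v : Ed d × Ed d) :
    fderiv ℝ (fun y => ∑ i ∈ s, F i y) x v = ∑ i ∈ s, fderiv ℝ (F i) x v := by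
  rw [fderiv_fun_sum hF]; simp

/-- Clairaut's theorem, in directional form. -/
lemma dv_comm (f : Ed d × Ed d → ℝ) (hf : ContDiff ℝ (⊤ : ℕ∞) f) (v w : Ed d × Ed d) (x : Ed d × Ed d) :
    fderiv ℝ (fun y => fderiv ℝ f y v) x w = fderiv ℝ (fun y => fderiv ℝ f y w) x v := by
  have hsymm : IsSymmSndFDerivAt ℝ f x := hf.contDiffAt.isSymmSndFDerivAt (by rw [minSmoothness_of_isRCLikeNormedField]; exact (WithTop.coe_le_coe.mpr (le_top : (2:ℕ∞) ≤ ⊤) : ((2:ℕ∞) : WithTop ℕ∞) ≤ ((⊤:ℕ∞) : WithTop ℕ∞)))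
  have hdf : DifferentiableAt ℝ (fderiv ℝ f) x :=
    ((hf.fderiv_right (m := (⊤ : ℕ∞)) (by simp)).differentiable (by simp)) x
  have key : ∀ u : Ed d × Ed d, fderiv ℝ (fun y => fderiv ℝ f y u) x =
      (ContinuousLinearMap.apply ℝ ℝ u).comp (fderiv ℝ (fderiv ℝ f) x) := by
    intro u
    have : (fun y => fderiv ℝ f y u) = (ContinuousLinearMap.apply ℝ ℝ u) ∘ (fderiv ℝ f) := rfl
    rw [this, fderiv_comp x (ContinuousLinearMap.apply ℝ ℝ u).differentiableAt hdf]
    simp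
  rw [key v, key w]
  simpa using hsymm.eq w v

/-- Engine: derivative of a sum of four scaled products. -/
lemma dv_comb (c1 c2 c3 c4 : ℝ) (p q r s t u v w : Fin d → Ed d × Ed d → ℝ)
    (hp : ∀ k, ContDiff ℝ (⊤ : ℕ∞) (p k)) (hq : ∀ k, ContDiff ℝ (⊤ : ℕ∞) (q k))
    (hr : ∀ k, ContDiff ℝ (⊤ : ℕ∞) (r k)) (hs : ∀ k, ContDiff ℝ (⊤ : ℕ∞) (s k))
    (ht : ∀ k, ContDiff ℝ (⊤ : ℕ∞) (t k)) (hu : ∀ k, ContDiff ℝ (⊤ : ℕ∞) (u k))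
    (hv : ∀ k, ContDiff ℝ (⊤ : ℕ∞) (v k)) (hw : ∀ k, ContDiff ℝ (⊤ : ℕ∞) (w k))
    (x dir : Ed d × Ed d) :
    fderiv ℝ (fun y => ∑ k : Fin d, (c1 * (p k y * q k y) + c2 * (r k y * s k y)
        + c3 * (t k y * u k y) + c4 * (v k y * w k y))) x dir
    = ∑ k : Fin d, (c1 * (fderiv ℝ (p k) x dir * q k x + p k x * fderiv ℝ (q k) x dir)
        + c2 * (fderiv ℝ (r k) x dir * s k x + r k x * fderiv ℝ (s k) x dir)
        + c3 * (fderiv ℝ (t k) x dir * u k x + t k x * fderiv ℝ (u k) x dir)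
        + c4 * (fderiv ℝ (v k) x dir * w k x + v k x * fderiv ℝ (w k) x dir)) := by
  have hD : ∀ (g : Ed d × Ed d → ℝ), ContDiff ℝ (⊤ : ℕ∞) g → ∀ y, DifferentiableAt ℝ g y :=
    fun g hg y => hg.differentiable (by simp) y
  have m1 : ∀ k, DifferentiableAt ℝ (fun y => p k y * q k y) x :=
    fun k => (hD _ (hp k) x).mul (hD _ (hq k) x)
  have m2 : ∀ k, DifferentiableAt ℝ (fun y => r k y * s k y) x :=
    fun k => (hD _ (hr k) x).mul (hD _ (hs k) x)
  have m3 : ∀ k, DifferentiableAt ℝ (fun y => t k y * u k y) x :=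
    fun k => (hD _ (ht k) x).mul (hD _ (hu k) x)
  have m4 : ∀ k, DifferentiableAt ℝ (fun y => v k y * w k y) x :=
    fun k => (hD _ (hv k) x).mul (hD _ (hw k) x)
  have a1 : ∀ k, DifferentiableAt ℝ (fun y => c1 * (p k y * q k y)) x :=
    fun k => (m1 k).const_mul c1
  have a2 : ∀ k, DifferentiableAt ℝ (fun y => c2 * (r k y * s k y)) x :=
    fun k => (m2 k).const_mul c2
  have a3 : ∀ k, DifferentiableAt ℝ (fun y => c3 * (t k y * u k y)) x :=
    fun k => (m3 k).const_mul c3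
  have a4 : ∀ k, DifferentiableAt ℝ (fun y => c4 * (v k y * w k y)) x :=
    fun k => (m4 k).const_mul c4
  rw [dv_sum _ (fun k y => c1 * (p k y * q k y) + c2 * (r k y * s k y) + c3 * (t k y * u k y) + c4 * (v k y * w k y)) (fun k _ => (((a1 k).add (a2 k)).add (a3 k)).add (a4 k))]
  refine Finset.sum_congr rfl fun k _ => ?_
  rw [fderiv_fun_add (((a1 k).fun_add (a2 k)).fun_add (a3 k)) (a4 k),
      fderiv_fun_add ((a1 k).fun_add (a2 k)) (a3 k), fderiv_fun_add (a1 k) (a2 k),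
      fderiv_const_mul (m1 k), fderiv_const_mul (m2 k), fderiv_const_mul (m3 k),
      fderiv_const_mul (m4 k)]
  simp only [ContinuousLinearMap.add_apply, ContinuousLinearMap.coe_smul', Pi.smul_apply,
    smul_eq_mul]
  rw [dv_mul _ _ (hD _ (hp k) x) (hD _ (hq k) x), dv_mul _ _ (hD _ (hr k) x) (hD _ (hs k) x),
    dv_mul _ _ (hD _ (ht k) x) (hD _ (hu k) x), dv_mul _ _ (hD _ (hv k) x) (hD _ (hw k) x)]


/-- The coordinate function `y ↦ y.1 k`. -/
def cf (d : ℕ) (k : Fin d) : Ed d × Ed d → ℝ := fun y => y.1 k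

lemma contDiff_cf (k : Fin d) : ContDiff ℝ (⊤ : ℕ∞) (cf d k) :=
  ((EuclideanSpace.proj k).comp (ContinuousLinearMap.fst ℝ (Ed d) (Ed d))).contDiff

lemma dv_cf (k : Fin d) (x dir : Ed d × Ed d) :
    fderiv ℝ (cf d k) x dir = dir.1 k := by
  have : HasFDerivAt (cf d k)
      ((EuclideanSpace.proj k).comp (ContinuousLinearMap.fst ℝ (Ed d) (Ed d))) x :=
    ((EuclideanSpace.proj k).comp (ContinuousLinearMap.fst ℝ (Ed d) (Ed d))).hasFDerivAt
  rw [this.fderiv]; rfl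

lemma dv_sum_mul {x : Ed d × Ed d} (u v : Fin d → Ed d × Ed d → ℝ)
    (hu : ∀ k, ContDiff ℝ (⊤ : ℕ∞) (u k)) (hv : ∀ k, ContDiff ℝ (⊤ : ℕ∞) (v k)) (dir : Ed d × Ed d) :
    fderiv ℝ (fun y => ∑ k : Fin d, u k y * v k y) x dir
      = ∑ k : Fin d, (fderiv ℝ (u k) x dir * v k x + u k x * fderiv ℝ (v k) x dir) := by
  rw [dv_sum _ (fun k y => u k y * v k y) (fun k _ => ((hu k).differentiable (by simp) x).mul
      ((hv k).differentiable (by simp) x))]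
  exact Finset.sum_congr rfl fun k _ => dv_mul _ _ ((hu k).differentiable (by simp) x)
    ((hv k).differentiable (by simp) x) dir

lemma gamAB_coord (α β : ℝ) (f g : Ed d × Ed d → ℝ) (x : Ed d × Ed d)
    (hfd : DifferentiableAt ℝ f x) (hgd : DifferentiableAt ℝ g x) :
    gamAB d α β f g x = ∑ i : Fin d,
      (dP d i f x * dP d i g x - α * (dP d i f x * dXi d i g x)
        - α * (dXi d i f x * dP d i g x) + (α ^ 2 + β) * (dXi d i f x * dXi d i g x)) := by
  unfold gamAB
  simp only [PiLp.inner_apply, RCLike.inner_apply, conj_trivial,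
    gradP_apply f x hfd, gradP_apply g x hgd, gradXi_apply f x hfd, gradXi_apply g x hgd,
    Finset.mul_sum]
  rw [← Finset.sum_sub_distrib, ← Finset.sum_sub_distrib, ← Finset.sum_add_distrib]
  exact Finset.sum_congr rfl fun i _ => by ring

lemma Lkol_coord (σ : ℝ) (G : Ed d × Ed d → ℝ) (x : Ed d × Ed d)
    (hG : DifferentiableAt ℝ G x) :
    Lkol d σ G x = (∑ i : Fin d, x.1 i * dXi d i G x)
      + σ ^ 2 / 2 * ∑ i : Fin d, dP d i (dP d i G) x := by
  unfold Lkol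
  congr 1
  simp only [PiLp.inner_apply, RCLike.inner_apply, conj_trivial, gradXi_apply G x hG]
  exact Finset.sum_congr rfl fun i _ => by ring

section Clairaut
variable (f : Ed d × Ed d → ℝ)

lemma hC1 (hf : ContDiff ℝ (⊤ : ℕ∞) f) (i k : Fin d) (y : Ed d × Ed d) :
    dXi d i (dP d k f) y = dP d k (dXi d i f) y :=
  dv_comm f hf (EuclideanSpace.single k 1, 0) (0, EuclideanSpace.single i 1) y

lemma hC2 (hf : ContDiff ℝ (⊤ : ℕ∞) f) (j k : Fin d) (y : Ed d × Ed d) :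
    dP d j (dP d k f) y = dP d k (dP d j f) y :=
  dv_comm f hf (EuclideanSpace.single k 1, 0) (EuclideanSpace.single j 1, 0) y

lemma hC3 (hf : ContDiff ℝ (⊤ : ℕ∞) f) (i k : Fin d) (y : Ed d × Ed d) :
    dXi d i (dXi d k f) y = dXi d k (dXi d i f) y :=
  dv_comm f hf (0, EuclideanSpace.single k 1) (0, EuclideanSpace.single i 1) y

lemma hC4 (hf : ContDiff ℝ (⊤ : ℕ∞) f) (j k : Fin d) (y : Ed d × Ed d) :
    dP d j (dP d j (dP d k f)) y = dP d k (dP d j (dP d j f)) y := by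
  have h1 : dP d j (dP d k f) = dP d k (dP d j f) := funext fun z => hC2 f hf j k z
  rw [h1]
  exact dv_comm (dP d j f) (contDiff_dP j f hf)
    (EuclideanSpace.single k 1, 0) (EuclideanSpace.single j 1, 0) y

lemma hC5 (hf : ContDiff ℝ (⊤ : ℕ∞) f) (j k : Fin d) (y : Ed d × Ed d) :
    dP d j (dP d j (dXi d k f)) y = dXi d k (dP d j (dP d j f)) y := by
  have h1 : dP d j (dXi d k f) = dXi d k (dP d j f) :=
    funext fun z => (hC1 f hf k j z).symm
  rw [h1]
  exact dv_comm (dP d j f) (contDiff_dP j f hf)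
    (0, EuclideanSpace.single k 1) (EuclideanSpace.single j 1, 0) y

end Clairaut


/-! ### Explicit representatives of `Γ(f,f)` and `Lf`, and their derivatives -/

/-- Explicit coordinate form of `Γ^{α,β}(f,f)`, shaped for `dv_comb`. -/
def GfF (d : ℕ) (α β : ℝ) (f : Ed d × Ed d → ℝ) : Ed d × Ed d → ℝ := fun y =>
  ∑ k : Fin d, ((1:ℝ) * (dP d k f y * dP d k f y) + (-(2*α)) * (dP d k f y * dXi d k f y)
    + (α^2+β) * (dXi d k f y * dXi d k f y) + (0:ℝ) * (dP d k f y * dP d k f y))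

/-- Explicit coordinate form of `Lf`. -/
def LfF (d : ℕ) (σ : ℝ) (f : Ed d × Ed d → ℝ) : Ed d × Ed d → ℝ := fun y =>
  (∑ k : Fin d, cf d k y * dXi d k f y) + σ^2/2 * ∑ k : Fin d, dP d k (dP d k f) y

/-- Explicit coordinate form of `∂_{p_j} Γ^{α,β}(f,f)`, shaped for `dv_comb`. -/
def HjF (d : ℕ) (α β : ℝ) (f : Ed d × Ed d → ℝ) (j : Fin d) : Ed d × Ed d → ℝ := fun y =>
  ∑ k : Fin d, ((2:ℝ) * (dP d k f y * dP d j (dP d k f) y)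
    + (-(2*α)) * (dP d j (dP d k f) y * dXi d k f y)
    + (-(2*α)) * (dP d k f y * dP d j (dXi d k f) y)
    + (2*(α^2+β)) * (dXi d k f y * dP d j (dXi d k f) y))

lemma foldP (g : Ed d × Ed d → ℝ) (j : Fin d) (y : Ed d × Ed d) :
    fderiv ℝ g y ((EuclideanSpace.single j 1 : Ed d), (0 : Ed d)) = dP d j g y := rfl

lemma foldX (g : Ed d × Ed d → ℝ) (i : Fin d) (y : Ed d × Ed d) :
    fderiv ℝ g y ((0 : Ed d), (EuclideanSpace.single i 1 : Ed d)) = dXi d i g y := rfl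

section Derivs
variable (α β σ : ℝ) (f : Ed d × Ed d → ℝ)

lemma GfF_smooth (hf : ContDiff ℝ (⊤ : ℕ∞) f) : ContDiff ℝ (⊤ : ℕ∞) (GfF d α β f) := by
  have hA : ∀ k : Fin d, ContDiff ℝ (⊤ : ℕ∞) (dP d k f) := fun k => contDiff_dP k f hf
  have hB : ∀ k : Fin d, ContDiff ℝ (⊤ : ℕ∞) (dXi d k f) := fun k => contDiff_dXi k f hf
  exact ContDiff.sum fun k _ =>
    (((contDiff_const.mul ((hA k).mul (hA k))).add
      (contDiff_const.mul ((hA k).mul (hB k)))).add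
      (contDiff_const.mul ((hB k).mul (hB k)))).add
      (contDiff_const.mul ((hA k).mul (hA k)))

lemma LfF_smooth (hf : ContDiff ℝ (⊤ : ℕ∞) f) : ContDiff ℝ (⊤ : ℕ∞) (LfF d σ f) := by
  have hB : ∀ k : Fin d, ContDiff ℝ (⊤ : ℕ∞) (dXi d k f) := fun k => contDiff_dXi k f hf
  exact (ContDiff.sum fun k _ => (contDiff_cf k).mul (hB k)).add
    (contDiff_const.mul (ContDiff.sum fun k _ =>
      contDiff_dP k (dP d k f) (contDiff_dP k f hf)))

lemma gamff_eq (hf : ContDiff ℝ (⊤ : ℕ∞) f) : gamAB d α β f f = GfF d α β f := by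
  funext y
  rw [gamAB_coord α β f f y (hf.differentiable (by simp) y) (hf.differentiable (by simp) y)]
  exact Finset.sum_congr rfl fun k _ => by ring

lemma Lkolf_eq (hf : ContDiff ℝ (⊤ : ℕ∞) f) : Lkol d σ f = LfF d σ f := by
  funext y
  rw [Lkol_coord σ f y (hf.differentiable (by simp) y)]
  rfl

lemma dGf (hf : ContDiff ℝ (⊤ : ℕ∞) f) (x dir : Ed d × Ed d) :
    fderiv ℝ (GfF d α β f) x dir = ∑ k : Fin d,
      (2 * (dP d k f x * fderiv ℝ (dP d k f) x dir)
        - 2*α*(fderiv ℝ (dP d k f) x dir * dXi d k f x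
            + dP d k f x * fderiv ℝ (dXi d k f) x dir)
        + 2*(α^2+β) * (dXi d k f x * fderiv ℝ (dXi d k f) x dir)) := by
  have hA : ∀ k : Fin d, ContDiff ℝ (⊤ : ℕ∞) (dP d k f) := fun k => contDiff_dP k f hf
  have hB : ∀ k : Fin d, ContDiff ℝ (⊤ : ℕ∞) (dXi d k f) := fun k => contDiff_dXi k f hf
  unfold GfF
  rw [dv_comb 1 (-(2*α)) (α^2+β) 0 (fun k => dP d k f) (fun k => dP d k f)
    (fun k => dP d k f) (fun k => dXi d k f) (fun k => dXi d k f) (fun k => dXi d k f)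
    (fun k => dP d k f) (fun k => dP d k f) hA hA hA hB hB hB hA hA x dir]
  exact Finset.sum_congr rfl fun k _ => by ring

end Derivs

section Derivs2
variable (α β σ : ℝ) (f : Ed d × Ed d → ℝ)

lemma dXiGf (hf : ContDiff ℝ (⊤ : ℕ∞) f) (x : Ed d × Ed d) (i : Fin d) :
    dXi d i (GfF d α β f) x = ∑ k : Fin d,
      (2 * (dP d k f x * dP d k (dXi d i f) x)
        - 2*α*(dP d k (dXi d i f) x * dXi d k f x + dP d k f x * dXi d i (dXi d k f) x)
        + 2*(α^2+β) * (dXi d k f x * dXi d i (dXi d k f) x)) := by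
  have h : dXi d i (GfF d α β f) x
      = fderiv ℝ (GfF d α β f) x ((0 : Ed d), (EuclideanSpace.single i 1 : Ed d)) := rfl
  rw [h, dGf α β f hf x ((0 : Ed d), (EuclideanSpace.single i 1 : Ed d))]
  refine Finset.sum_congr rfl fun k _ => ?_
  simp only [foldX]
  rw [hC1 f hf i k x]

lemma HjF_eq (hf : ContDiff ℝ (⊤ : ℕ∞) f) (j : Fin d) :
    dP d j (GfF d α β f) = HjF d α β f j := by
  funext y
  have h : dP d j (GfF d α β f) y
      = fderiv ℝ (GfF d α β f) y ((EuclideanSpace.single j 1 : Ed d), (0 : Ed d)) := rfl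
  rw [h, dGf α β f hf y ((EuclideanSpace.single j 1 : Ed d), (0 : Ed d))]
  refine Finset.sum_congr rfl fun k _ => ?_
  simp only [foldP]
  ring

lemma d2Gf (hf : ContDiff ℝ (⊤ : ℕ∞) f) (x : Ed d × Ed d) (j : Fin d) :
    dP d j (dP d j (GfF d α β f)) x = ∑ k : Fin d,
      (2 * (dP d j (dP d k f) x * dP d j (dP d k f) x
              + dP d k f x * dP d k (dP d j (dP d j f)) x)
        + (-(2*α)) * (dP d k (dP d j (dP d j f)) x * dXi d k f x
              + dP d j (dP d k f) x * dP d j (dXi d k f) x)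
        + (-(2*α)) * (dP d j (dP d k f) x * dP d j (dXi d k f) x
              + dP d k f x * dXi d k (dP d j (dP d j f)) x)
        + (2*(α^2+β)) * (dP d j (dXi d k f) x * dP d j (dXi d k f) x
              + dXi d k f x * dXi d k (dP d j (dP d j f)) x)) := by
  have hA : ∀ k : Fin d, ContDiff ℝ (⊤ : ℕ∞) (dP d k f) := fun k => contDiff_dP k f hf
  have hB : ∀ k : Fin d, ContDiff ℝ (⊤ : ℕ∞) (dXi d k f) := fun k => contDiff_dXi k f hf
  have hAA : ∀ k : Fin d, ContDiff ℝ (⊤ : ℕ∞) (dP d j (dP d k f)) :=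
    fun k => contDiff_dP j _ (hA k)
  have hPX : ∀ k : Fin d, ContDiff ℝ (⊤ : ℕ∞) (dP d j (dXi d k f)) :=
    fun k => contDiff_dP j _ (hB k)
  rw [HjF_eq α β f hf j]
  have h : dP d j (HjF d α β f j) x
      = fderiv ℝ (HjF d α β f j) x ((EuclideanSpace.single j 1 : Ed d), (0 : Ed d)) := rfl
  rw [h]
  unfold HjF
  rw [dv_comb 2 (-(2*α)) (-(2*α)) (2*(α^2+β)) (fun k => dP d k f)
    (fun k => dP d j (dP d k f)) (fun k => dP d j (dP d k f)) (fun k => dXi d k f)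
    (fun k => dP d k f) (fun k => dP d j (dXi d k f)) (fun k => dXi d k f)
    (fun k => dP d j (dXi d k f)) hA hAA hAA hB hA hPX hB hPX x
    ((EuclideanSpace.single j 1 : Ed d), (0 : Ed d))]
  refine Finset.sum_congr rfl fun k _ => ?_
  simp only [foldP]
  rw [hC4 f hf j k x, hC5 f hf j k x]

lemma dLf (hf : ContDiff ℝ (⊤ : ℕ∞) f) (x dir : Ed d × Ed d) :
    fderiv ℝ (LfF d σ f) x dir
      = (∑ k : Fin d, (dir.1 k * dXi d k f x + x.1 k * fderiv ℝ (dXi d k f) x dir))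
        + σ^2/2 * ∑ k : Fin d, fderiv ℝ (dP d k (dP d k f)) x dir := by
  have hB : ∀ k : Fin d, ContDiff ℝ (⊤ : ℕ∞) (dXi d k f) := fun k => contDiff_dXi k f hf
  have hPP : ∀ k : Fin d, ContDiff ℝ (⊤ : ℕ∞) (dP d k (dP d k f)) :=
    fun k => contDiff_dP k _ (contDiff_dP k f hf)
  have h1 : DifferentiableAt ℝ (fun y => ∑ k : Fin d, cf d k y * dXi d k f y) x :=
    ((ContDiff.sum fun k _ => (contDiff_cf k).mul (hB k)).differentiable (by simp)) x
  have h2s : DifferentiableAt ℝ (fun y => ∑ k : Fin d, dP d k (dP d k f) y) x :=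
    ((ContDiff.sum fun (k : Fin d) _ => hPP k).differentiable (by simp)) x
  have h2 : DifferentiableAt ℝ (fun y => σ^2/2 * ∑ k : Fin d, dP d k (dP d k f) y) x :=
    h2s.const_mul _
  unfold LfF
  rw [fderiv_fun_add h1 h2]
  simp only [ContinuousLinearMap.add_apply]
  rw [fderiv_const_mul h2s]
  simp only [ContinuousLinearMap.coe_smul', Pi.smul_apply, smul_eq_mul]
  rw [dv_sum_mul (cf d) (fun k => dXi d k f) contDiff_cf hB dir,
    dv_sum _ _ (fun (k : Fin d) _ => (hPP k).differentiable (by simp) x) dir]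
  simp only [dv_cf]
  rfl

lemma dPLf (hf : ContDiff ℝ (⊤ : ℕ∞) f) (x : Ed d × Ed d) (i : Fin d) :
    dP d i (LfF d σ f) x
      = (dXi d i f x + ∑ k : Fin d, x.1 k * dP d i (dXi d k f) x)
        + σ^2/2 * ∑ k : Fin d, dP d i (dP d k (dP d k f)) x := by
  have h : dP d i (LfF d σ f) x
      = fderiv ℝ (LfF d σ f) x ((EuclideanSpace.single i 1 : Ed d), (0 : Ed d)) := rfl
  rw [h, dLf σ f hf x ((EuclideanSpace.single i 1 : Ed d), (0 : Ed d))]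
  simp only [foldP]
  congr 1
  rw [Finset.sum_add_distrib]
  congr 1
  simp [EuclideanSpace.single_apply, ite_mul]

lemma dXiLf (hf : ContDiff ℝ (⊤ : ℕ∞) f) (x : Ed d × Ed d) (i : Fin d) :
    dXi d i (LfF d σ f) x
      = (∑ k : Fin d, x.1 k * dXi d i (dXi d k f) x)
        + σ^2/2 * ∑ k : Fin d, dXi d i (dP d k (dP d k f)) x := by
  have h : dXi d i (LfF d σ f) x
      = fderiv ℝ (LfF d σ f) x ((0 : Ed d), (EuclideanSpace.single i 1 : Ed d)) := rfl
  rw [h, dLf σ f hf x ((0 : Ed d), (EuclideanSpace.single i 1 : Ed d))]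
  simp only [foldX]
  congr 1
  refine Finset.sum_congr rfl fun k _ => ?_
  simp

end Derivs2
/-- **Key lemma: lower bound for `Γ₂^{α,β}`.** For all `α ∈ ℝ`, `β ≥ 0` and smooth `f`,
`Γ₂^{α,β}(f) ≥ α‖∇_ξ f‖² − ⟨∇_ξ f, ∇_p f⟩` at every point. -/
theorem gamAB2_lower_bound (d : ℕ) (hd : 1 ≤ d) (σ : ℝ) (hσ : 0 < σ)
    (α β : ℝ) (hβ : 0 ≤ β)
    (f : Ed d × Ed d → ℝ) (hf : ContDiff ℝ (⊤ : ℕ∞) f) (x : Ed d × Ed d) :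
    α * ‖gradXi d f x‖ ^ 2 - inner ℝ (gradXi d f x) (gradP d f x) ≤ gamAB2 d σ α β f x := by
  have hDf : Differentiable ℝ f := hf.differentiable (by simp)
  have hn : ‖gradXi d f x‖^2 = ∑ i : Fin d, (dXi d i f x)^2 := by
    rw [← real_inner_self_eq_norm_sq]
    simp only [PiLp.inner_apply, RCLike.inner_apply, conj_trivial, gradXi_apply f x (hDf x)]
    exact Finset.sum_congr rfl fun i _ => by ring
  have hip : (inner ℝ (gradXi d f x) (gradP d f x) : ℝ) = ∑ i : Fin d, dXi d i f x * dP d i f x := by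
    simp only [PiLp.inner_apply, RCLike.inner_apply, conj_trivial, gradXi_apply f x (hDf x),
      gradP_apply f x (hDf x)]
    exact Finset.sum_congr rfl fun i _ => by ring
  have hLG : Lkol d σ (gamAB d α β f f) x
      = (∑ i : Fin d, x.1 i * (∑ k : Fin d, (2 * (dP d k f x * dP d k (dXi d i f) x) - 2*α*(dP d k (dXi d i f) x * dXi d k f x + dP d k f x * dXi d i (dXi d k f) x) + 2*(α^2+β) * (dXi d k f x * dXi d i (dXi d k f) x))))
        + σ^2/2 * ∑ j : Fin d, (∑ k : Fin d, (2 * (dP d j (dP d k f) x * dP d j (dP d k f) x + dP d k f x * dP d k (dP d j (dP d j f)) x) + (-(2*α)) * (dP d k (dP d j (dP d j f)) x * dXi d k f x + dP d j (dP d k f) x * dP d j (dXi d k f) x) + (-(2*α)) * (dP d j (dP d k f) x * dP d j (dXi d k f) x + dP d k f x * dXi d k (dP d j (dP d j f)) x) + (2*(α^2+β)) * (dP d j (dXi d k f) x * dP d j (dXi d k f) x + dXi d k f x * dXi d k (dP d j (dP d j f)) x))) := by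
    rw [gamff_eq α β f hf, Lkol_coord σ _ x (((GfF_smooth α β f hf).differentiable (by simp)) x)]
    congr 1
    · exact Finset.sum_congr rfl fun i _ => by rw [dXiGf α β f hf x i]
    · congr 1
      exact Finset.sum_congr rfl fun j _ => d2Gf α β f hf x j
  have hGL : gamAB d α β f (Lkol d σ f) x = ∑ i : Fin d, (dP d i f x * ((dXi d i f x + (∑ k : Fin d, x.1 k * dP d i (dXi d k f) x)) + σ^2/2 * (∑ k : Fin d, dP d i (dP d k (dP d k f)) x)) - α * (dP d i f x * ((∑ k : Fin d, x.1 k * dXi d i (dXi d k f) x) + σ^2/2 * (∑ k : Fin d, dXi d i (dP d k (dP d k f)) x))) - α * (dXi d i f x * ((dXi d i f x + (∑ k : Fin d, x.1 k * dP d i (dXi d k f) x)) + σ^2/2 * (∑ k : Fin d, dP d i (dP d k (dP d k f)) x))) + (α^2+β) * (dXi d i f x * ((∑ k : Fin d, x.1 k * dXi d i (dXi d k f) x) + σ^2/2 * (∑ k : Fin d, dXi d i (dP d k (dP d k f)) x)))) := by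
    rw [Lkolf_eq σ f hf,
      gamAB_coord α β f (LfF d σ f) x (hDf x) (((LfF_smooth σ f hf).differentiable (by simp)) x)]
    exact Finset.sum_congr rfl fun i _ => by rw [dPLf σ f hf x i, dXiLf σ f hf x i]
  have claim1 : (∑ i : Fin d, x.1 i * (∑ k : Fin d, (2 * (dP d k f x * dP d k (dXi d i f) x) - 2*α*(dP d k (dXi d i f) x * dXi d k f x + dP d k f x * dXi d i (dXi d k f) x) + 2*(α^2+β) * (dXi d k f x * dXi d i (dXi d k f) x))))
      = 2 * ∑ i : Fin d, ∑ k : Fin d, (x.1 k * (dP d i f x * dP d i (dXi d k f) x - α * (dP d i f x * dXi d i (dXi d k f) x) - α * (dXi d i f x * dP d i (dXi d k f) x) + (α^2+β) * (dXi d i f x * dXi d i (dXi d k f) x))) := by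
    calc (∑ i : Fin d, x.1 i * (∑ k : Fin d, (2 * (dP d k f x * dP d k (dXi d i f) x) - 2*α*(dP d k (dXi d i f) x * dXi d k f x + dP d k f x * dXi d i (dXi d k f) x) + 2*(α^2+β) * (dXi d k f x * dXi d i (dXi d k f) x))))
        = ∑ i : Fin d, ∑ k : Fin d, x.1 i * (2 * (dP d k f x * dP d k (dXi d i f) x) - 2*α*(dP d k (dXi d i f) x * dXi d k f x + dP d k f x * dXi d i (dXi d k f) x) + 2*(α^2+β) * (dXi d k f x * dXi d i (dXi d k f) x)) := by simp only [Finset.mul_sum]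
      _ = ∑ k : Fin d, ∑ i : Fin d, x.1 i * (2 * (dP d k f x * dP d k (dXi d i f) x) - 2*α*(dP d k (dXi d i f) x * dXi d k f x + dP d k f x * dXi d i (dXi d k f) x) + 2*(α^2+β) * (dXi d k f x * dXi d i (dXi d k f) x)) := Finset.sum_comm
      _ = ∑ a : Fin d, ∑ b : Fin d, 2 * (x.1 b * (dP d a f x * dP d a (dXi d b f) x - α * (dP d a f x * dXi d a (dXi d b f) x) - α * (dXi d a f x * dP d a (dXi d b f) x) + (α^2+β) * (dXi d a f x * dXi d a (dXi d b f) x))) :=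
          Finset.sum_congr rfl fun a _ => Finset.sum_congr rfl fun b _ => by
            rw [hC3 f hf b a x]; ring
      _ = 2 * ∑ i : Fin d, ∑ k : Fin d, (x.1 k * (dP d i f x * dP d i (dXi d k f) x - α * (dP d i f x * dXi d i (dXi d k f) x) - α * (dXi d i f x * dP d i (dXi d k f) x) + (α^2+β) * (dXi d i f x * dXi d i (dXi d k f) x))) := by simp only [Finset.mul_sum]
  have claim2 : (∑ j : Fin d, ∑ k : Fin d, (2 * (dP d j (dP d k f) x * dP d j (dP d k f) x + dP d k f x * dP d k (dP d j (dP d j f)) x) + (-(2*α)) * (dP d k (dP d j (dP d j f)) x * dXi d k f x + dP d j (dP d k f) x * dP d j (dXi d k f) x) + (-(2*α)) * (dP d j (dP d k f) x * dP d j (dXi d k f) x + dP d k f x * dXi d k (dP d j (dP d j f)) x) + (2*(α^2+β)) * (dP d j (dXi d k f) x * dP d j (dXi d k f) x + dXi d k f x * dXi d k (dP d j (dP d j f)) x)))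
      = 2 * (∑ j : Fin d, ∑ k : Fin d, ((dP d j (dP d k f) x - α * dP d j (dXi d k f) x)^2 + β * (dP d j (dXi d k f) x)^2))
        + 2 * ∑ i : Fin d, ∑ k : Fin d, (dP d i f x * dP d i (dP d k (dP d k f)) x - α * (dP d i f x * dXi d i (dP d k (dP d k f)) x) - α * (dXi d i f x * dP d i (dP d k (dP d k f)) x) + (α^2+β) * (dXi d i f x * dXi d i (dP d k (dP d k f)) x)) := by
    calc (∑ j : Fin d, ∑ k : Fin d, (2 * (dP d j (dP d k f) x * dP d j (dP d k f) x + dP d k f x * dP d k (dP d j (dP d j f)) x) + (-(2*α)) * (dP d k (dP d j (dP d j f)) x * dXi d k f x + dP d j (dP d k f) x * dP d j (dXi d k f) x) + (-(2*α)) * (dP d j (dP d k f) x * dP d j (dXi d k f) x + dP d k f x * dXi d k (dP d j (dP d j f)) x) + (2*(α^2+β)) * (dP d j (dXi d k f) x * dP d j (dXi d k f) x + dXi d k f x * dXi d k (dP d j (dP d j f)) x)))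
        = ∑ j : Fin d, ∑ k : Fin d, (2 * ((dP d j (dP d k f) x - α * dP d j (dXi d k f) x)^2 + β * (dP d j (dXi d k f) x)^2) + 2 * (dP d k f x * dP d k (dP d j (dP d j f)) x - α * (dP d k f x * dXi d k (dP d j (dP d j f)) x) - α * (dXi d k f x * dP d k (dP d j (dP d j f)) x) + (α^2+β) * (dXi d k f x * dXi d k (dP d j (dP d j f)) x))) :=
          Finset.sum_congr rfl fun j _ => Finset.sum_congr rfl fun k _ => by ring
      _ = (∑ j : Fin d, ∑ k : Fin d, 2 * ((dP d j (dP d k f) x - α * dP d j (dXi d k f) x)^2 + β * (dP d j (dXi d k f) x)^2))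
            + ∑ j : Fin d, ∑ k : Fin d, 2 * (dP d k f x * dP d k (dP d j (dP d j f)) x - α * (dP d k f x * dXi d k (dP d j (dP d j f)) x) - α * (dXi d k f x * dP d k (dP d j (dP d j f)) x) + (α^2+β) * (dXi d k f x * dXi d k (dP d j (dP d j f)) x)) := by
          simp only [Finset.sum_add_distrib]
      _ = (∑ j : Fin d, ∑ k : Fin d, 2 * ((dP d j (dP d k f) x - α * dP d j (dXi d k f) x)^2 + β * (dP d j (dXi d k f) x)^2))
            + ∑ i : Fin d, ∑ k : Fin d, 2 * (dP d i f x * dP d i (dP d k (dP d k f)) x - α * (dP d i f x * dXi d i (dP d k (dP d k f)) x) - α * (dXi d i f x * dP d i (dP d k (dP d k f)) x) + (α^2+β) * (dXi d i f x * dXi d i (dP d k (dP d k f)) x)) := by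
          congr 1
          exact Finset.sum_comm
      _ = 2 * (∑ j : Fin d, ∑ k : Fin d, ((dP d j (dP d k f) x - α * dP d j (dXi d k f) x)^2 + β * (dP d j (dXi d k f) x)^2))
            + 2 * ∑ i : Fin d, ∑ k : Fin d, (dP d i f x * dP d i (dP d k (dP d k f)) x - α * (dP d i f x * dXi d i (dP d k (dP d k f)) x) - α * (dXi d i f x * dP d i (dP d k (dP d k f)) x) + (α^2+β) * (dXi d i f x * dXi d i (dP d k (dP d k f)) x)) := by simp only [Finset.mul_sum]
  have claim3 : (∑ i : Fin d, (dP d i f x * ((dXi d i f x + (∑ k : Fin d, x.1 k * dP d i (dXi d k f) x)) + σ^2/2 * (∑ k : Fin d, dP d i (dP d k (dP d k f)) x)) - α * (dP d i f x * ((∑ k : Fin d, x.1 k * dXi d i (dXi d k f) x) + σ^2/2 * (∑ k : Fin d, dXi d i (dP d k (dP d k f)) x))) - α * (dXi d i f x * ((dXi d i f x + (∑ k : Fin d, x.1 k * dP d i (dXi d k f) x)) + σ^2/2 * (∑ k : Fin d, dP d i (dP d k (dP d k f)) x))) + (α^2+β) * (dXi d i f x * ((∑ k : Fin d, x.1 k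 * dXi d i (dXi d k f) x) + σ^2/2 * (∑ k : Fin d, dXi d i (dP d k (dP d k f)) x)))))
      = (∑ i : Fin d, (dP d i f x * dXi d i f x - α * (dXi d i f x * dXi d i f x))) + ((∑ i : Fin d, ∑ k : Fin d, (x.1 k * (dP d i f x * dP d i (dXi d k f) x - α * (dP d i f x * dXi d i (dXi d k f) x) - α * (dXi d i f x * dP d i (dXi d k f) x) + (α^2+β) * (dXi d i f x * dXi d i (dXi d k f) x))))
          + σ^2/2 * ∑ i : Fin d, ∑ k : Fin d, (dP d i f x * dP d i (dP d k (dP d k f)) x - α * (dP d i f x * dXi d i (dP d k (dP d k f)) x) - α * (dXi d i f x * dP d i (dP d k (dP d k f)) x) + (α^2+β) * (dXi d i f x * dXi d i (dP d k (dP d k f)) x))) := by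
    have h : ∀ i : Fin d, (dP d i f x * ((dXi d i f x + (∑ k : Fin d, x.1 k * dP d i (dXi d k f) x)) + σ^2/2 * (∑ k : Fin d, dP d i (dP d k (dP d k f)) x)) - α * (dP d i f x * ((∑ k : Fin d, x.1 k * dXi d i (dXi d k f) x) + σ^2/2 * (∑ k : Fin d, dXi d i (dP d k (dP d k f)) x))) - α * (dXi d i f x * ((dXi d i f x + (∑ k : Fin d, x.1 k * dP d i (dXi d k f) x)) + σ^2/2 * (∑ k : Fin d, dP d i (dP d k (dP d k f)) x))) + (α^2+β) * (dXi d i f x * ((∑ k : Fin d, x.1 k * dXi d i (dXi d k f) x) + σ^2/2 * (∑ k : Fin d, dXi d i (dP d k (dP d k f)) x))))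
        = (dP d i f x * dXi d i f x - α * (dXi d i f x * dXi d i f x))
          + ((∑ k : Fin d, (x.1 k * (dP d i f x * dP d i (dXi d k f) x - α * (dP d i f x * dXi d i (dXi d k f) x) - α * (dXi d i f x * dP d i (dXi d k f) x) + (α^2+β) * (dXi d i f x * dXi d i (dXi d k f) x)))) + σ^2/2 * ∑ k : Fin d, (dP d i f x * dP d i (dP d k (dP d k f)) x - α * (dP d i f x * dXi d i (dP d k (dP d k f)) x) - α * (dXi d i f x * dP d i (dP d k (dP d k f)) x) + (α^2+β) * (dXi d i f x * dXi d i (dP d k (dP d k f)) x))) := by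
      intro i
      have hP : (∑ k : Fin d, (x.1 k * (dP d i f x * dP d i (dXi d k f) x - α * (dP d i f x * dXi d i (dXi d k f) x) - α * (dXi d i f x * dP d i (dXi d k f) x) + (α^2+β) * (dXi d i f x * dXi d i (dXi d k f) x))))
          = dP d i f x * (∑ k : Fin d, x.1 k * dP d i (dXi d k f) x)
            - α * (dP d i f x * (∑ k : Fin d, x.1 k * dXi d i (dXi d k f) x))
            - α * (dXi d i f x * (∑ k : Fin d, x.1 k * dP d i (dXi d k f) x))
            + (α^2+β) * (dXi d i f x * (∑ k : Fin d, x.1 k * dXi d i (dXi d k f) x)) := by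
        simp only [Finset.mul_sum]
        rw [← Finset.sum_sub_distrib, ← Finset.sum_sub_distrib, ← Finset.sum_add_distrib]
        exact Finset.sum_congr rfl fun k _ => by ring
      have hS : (∑ k : Fin d, (dP d i f x * dP d i (dP d k (dP d k f)) x - α * (dP d i f x * dXi d i (dP d k (dP d k f)) x) - α * (dXi d i f x * dP d i (dP d k (dP d k f)) x) + (α^2+β) * (dXi d i f x * dXi d i (dP d k (dP d k f)) x)))
          = dP d i f x * (∑ k : Fin d, dP d i (dP d k (dP d k f)) x)
            - α * (dP d i f x * (∑ k : Fin d, dXi d i (dP d k (dP d k f)) x))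
            - α * (dXi d i f x * (∑ k : Fin d, dP d i (dP d k (dP d k f)) x))
            + (α^2+β) * (dXi d i f x * (∑ k : Fin d, dXi d i (dP d k (dP d k f)) x)) := by
        simp only [Finset.mul_sum]
        rw [← Finset.sum_sub_distrib, ← Finset.sum_sub_distrib, ← Finset.sum_add_distrib]
        try exact Finset.sum_congr rfl fun k _ => by ring
      rw [hP, hS]; ring
    calc (∑ i : Fin d, (dP d i f x * ((dXi d i f x + (∑ k : Fin d, x.1 k * dP d i (dXi d k f) x)) + σ^2/2 * (∑ k : Fin d, dP d i (dP d k (dP d k f)) x)) - α * (dP d i f x * ((∑ k : Fin d, x.1 k * dXi d i (dXi d k f) x) + σ^2/2 * (∑ k : Fin d, dXi d i (dP d k (dP d k f)) x))) - α * (dXi d i f x * ((dXi d i f x + (∑ k : Fin d, x.1 k * dP d i (dXi d k f) x)) + σ^2/2 * (∑ k : Fin d, dP d i (dP d k (dP d k f)) x))) + (α^2+β) * (dXi d i f x * ((∑ k : Fin d, x.1 k * dXi d i (dXi d k f) x) + σ^2/2 * (∑ k : Fin d, dXi d i (dP d k (dP d k f)) x)))))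
        = ∑ i : Fin d, ((dP d i f x * dXi d i f x - α * (dXi d i f x * dXi d i f x))
            + ((∑ k : Fin d, (x.1 k * (dP d i f x * dP d i (dXi d k f) x - α * (dP d i f x * dXi d i (dXi d k f) x) - α * (dXi d i f x * dP d i (dXi d k f) x) + (α^2+β) * (dXi d i f x * dXi d i (dXi d k f) x)))) + σ^2/2 * ∑ k : Fin d, (dP d i f x * dP d i (dP d k (dP d k f)) x - α * (dP d i f x * dXi d i (dP d k (dP d k f)) x) - α * (dXi d i f x * dP d i (dP d k (dP d k f)) x) + (α^2+β) * (dXi d i f x * dXi d i (dP d k (dP d k f)) x)))) :=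
          Finset.sum_congr rfl fun i _ => h i
      _ = (∑ i : Fin d, (dP d i f x * dXi d i f x - α * (dXi d i f x * dXi d i f x))) + ((∑ i : Fin d, ∑ k : Fin d, (x.1 k * (dP d i f x * dP d i (dXi d k f) x - α * (dP d i f x * dXi d i (dXi d k f) x) - α * (dXi d i f x * dP d i (dXi d k f) x) + (α^2+β) * (dXi d i f x * dXi d i (dXi d k f) x))))
            + σ^2/2 * ∑ i : Fin d, ∑ k : Fin d, (dP d i f x * dP d i (dP d k (dP d k f)) x - α * (dP d i f x * dXi d i (dP d k (dP d k f)) x) - α * (dXi d i f x * dP d i (dP d k (dP d k f)) x) + (α^2+β) * (dXi d i f x * dXi d i (dP d k (dP d k f)) x))) := by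
          rw [Finset.sum_add_distrib, Finset.sum_add_distrib, ← Finset.mul_sum]
  have claim4 : (∑ i : Fin d, (dP d i f x * dXi d i f x - α * (dXi d i f x * dXi d i f x)))
      = (∑ i : Fin d, dXi d i f x * dP d i f x) - α * ∑ i : Fin d, (dXi d i f x)^2 := by
    rw [Finset.mul_sum, ← Finset.sum_sub_distrib]
    exact Finset.sum_congr rfl fun i _ => by ring
  have hQ : 0 ≤ ∑ j : Fin d, ∑ k : Fin d, ((dP d j (dP d k f) x - α * dP d j (dXi d k f) x)^2 + β * (dP d j (dXi d k f) x)^2) :=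
    Finset.sum_nonneg fun j _ => Finset.sum_nonneg fun k _ =>
      add_nonneg (sq_nonneg _) (mul_nonneg hβ (sq_nonneg _))
  have hkey : gamAB2 d σ α β f x
      = (α * ∑ i : Fin d, (dXi d i f x)^2 - ∑ i : Fin d, dXi d i f x * dP d i f x)
        + σ^2/2 * ∑ j : Fin d, ∑ k : Fin d, ((dP d j (dP d k f) x - α * dP d j (dXi d k f) x)^2 + β * (dP d j (dXi d k f) x)^2) := by
    unfold gamAB2
    rw [hLG, hGL, claim1, claim2, claim3, claim4]
    ring
  rw [hn, hip, hkey]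
  have hpos : 0 ≤ σ^2/2 * ∑ j : Fin d, ∑ k : Fin d, ((dP d j (dP d k f) x - α * dP d j (dXi d k f) x)^2 + β * (dP d j (dXi d k f) x)^2) :=
    mul_nonneg (by positivity) hQ
  linarith
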